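/- In a vertex-minimal graph G with no (F_3,F_4)-partition, there is no 5-vertex v all of whose neighbors have degree at most 3, where one neighbor x_1 is a 2-vertex not lying on any triangle. -/

import Mathlib

open SimpleGraph Finset

/-- `A` (playing the role of `A₃`) together with `S \ A` (playing the role of `A₄`)
is an `(𝓕₃,𝓕₄)`-partition of the subgraph of `G` induced on the vertex set `S`:
`A` induces a forest of maximum degree at most `3` and `S \ A` induces a forest of
maximum degree at most `4`. -/
def FFPartOn {V : Type*} [Fintype V] [DecidableEq V] (G : SimpleGraph V)
    [DecidableRel G.Adj] (S A : Finset V) : Prop :=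
  A ⊆ S ∧
  (∀ v ∈ A, (G.neighborFinset v ∩ A).card ≤ 3) ∧
  (∀ v ∈ S \ A, (G.neighborFinset v ∩ (S \ A)).card ≤ 4) ∧
  (G.induce (↑A : Set V)).IsAcyclic ∧
  (G.induce (↑(S \ A) : Set V)).IsAcyclic

/-- `G` is a vertex-minimal graph admitting no `(𝓕₃,𝓕₄)`-partition: `G` itself has no
`(𝓕₃,𝓕₄)`-partition, but for every vertex `v` the graph `G - v` has one. -/
def MinimalNoFF {V : Type*} [Fintype V] [DecidableEq V] (G : SimpleGraph V)
    [DecidableRel G.Adj] : Prop :=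
  (¬ ∃ A : Finset V, FFPartOn G Finset.univ A) ∧
  (∀ v : V, ∃ A : Finset V, FFPartOn G (Finset.univ \ {v}) A)


section helpers
variable {V : Type*} {G : SimpleGraph V}

lemma lift_walk {s : Set V} :
    ∀ {u v : V} (p : G.Walk u v), (∀ z ∈ p.support, z ∈ s) →
      ∀ (hu : u ∈ s) (hv : v ∈ s),
      ∃ q : (G.induce s).Walk ⟨u, hu⟩ ⟨v, hv⟩,
        q.map (SimpleGraph.Embedding.induce s).toHom = p := by
  intro u v p
  induction p with
  | nil => exact fun h hu hv => ⟨.nil, rfl⟩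
  | @cons u u' v hadj p ih =>
    intro h hu hv
    have hu' : u' ∈ s := h u' (by simp)
    obtain ⟨q, hq⟩ := ih (fun z hz => h z (by simp [hz])) hu' hv
    refine ⟨.cons (by exact hadj) q, ?_⟩
    subst hq; rfl

lemma induce_acyclic_iff {s : Set V} :
    (G.induce s).IsAcyclic ↔
      ∀ (u : V) (c : G.Walk u u), c.IsCycle → ∃ z ∈ c.support, z ∉ s := by
  constructor
  · intro hac u c hc
    by_contra hs
    push_neg at hs
    have hu : u ∈ s := hs u c.start_mem_support
    obtain ⟨q, hq⟩ := lift_walk c hs hu hu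
    have hinj : Function.Injective (SimpleGraph.Embedding.induce (G := G) s).toHom :=
      (SimpleGraph.Embedding.induce (G := G) s).injective
    have hc' : (q.map (SimpleGraph.Embedding.induce (G := G) s).toHom).IsCycle := by
      rw [hq]; exact hc
    exact hac q ((SimpleGraph.Walk.map_isCycle_iff_of_injective hinj).mp hc')
  · intro h u q hq
    have hinj : Function.Injective (SimpleGraph.Embedding.induce (G := G) s).toHom :=
      (SimpleGraph.Embedding.induce (G := G) s).injective
    have hc : (q.map (SimpleGraph.Embedding.induce (G := G) s).toHom).IsCycle := hq.map hinj
    obtain ⟨z, hz, hzs⟩ := h _ _ hc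
    rw [SimpleGraph.Walk.support_map] at hz
    obtain ⟨⟨z', hz's⟩, _, rfl⟩ := List.mem_map.mp hz
    exact hzs hz's

lemma acyclic_mono {s t : Set V} (hst : s ⊆ t) (h : (G.induce t).IsAcyclic) :
    (G.induce s).IsAcyclic := by
  rw [induce_acyclic_iff] at h ⊢
  intro u c hc
  obtain ⟨z, hz, hzt⟩ := h u c hc
  exact ⟨z, hz, fun hzs => hzt (hst hzs)⟩

lemma cycle_two_nbrs {x : V} {c : G.Walk x x} (hc : c.IsCycle) :
    ∃ y z : V, y ≠ z ∧ G.Adj x y ∧ G.Adj x z ∧ y ∈ c.support ∧ z ∈ c.support := by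
  have hlen := hc.three_le_length
  cases c with
  | nil => exact absurd hc SimpleGraph.Walk.IsCycle.not_of_nil
  | @cons _ y _ hadj p =>
    rw [SimpleGraph.Walk.cons_isCycle_iff] at hc
    have hrevnil : ¬ p.reverse.Nil :=
      SimpleGraph.Walk.not_nil_of_ne (fun hxy => G.irrefl (hxy ▸ hadj))
    obtain ⟨z, h2, q2, hq2⟩ := SimpleGraph.Walk.not_nil_iff.mp hrevnil
    refine ⟨y, z, ?_, hadj, h2, by simp, ?_⟩
    · intro hyz
      subst hyz
      -- p = q2.reverse.concat h2.symm
      have hp : p = q2.reverse.append (SimpleGraph.Walk.cons h2.symm SimpleGraph.Walk.nil) := by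
        have h3 := congrArg SimpleGraph.Walk.reverse hq2
        rw [SimpleGraph.Walk.reverse_reverse] at h3
        rw [h3, SimpleGraph.Walk.reverse_cons]
      have hq2path : q2.reverse.IsPath := by
        have h4 := hc.1
        rw [hp] at h4
        exact h4.of_append_left
      have hnil : q2.reverse = SimpleGraph.Walk.nil :=
        SimpleGraph.Walk.isPath_iff_eq_nil.mp hq2path
      have hplen : p.length = 1 := by
        rw [hp, SimpleGraph.Walk.length_append, hnil]
        rfl
      simp [hplen] at hlen
    · have : z ∈ p.reverse.support := by rw [hq2]; simp
      rw [SimpleGraph.Walk.support_reverse] at this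
      simp only [SimpleGraph.Walk.support_cons, List.mem_cons]
      exact Or.inr (List.mem_reverse.mp this)

lemma acyclic_insert [DecidableEq V] {s : Set V} {x : V}
    (hx : ∀ y z : V, G.Adj x y → G.Adj x z → y ∈ s → z ∈ s → y = z)
    (hA : (G.induce s).IsAcyclic) : (G.induce (insert x s)).IsAcyclic := by
  rw [induce_acyclic_iff] at hA ⊢
  intro u c hc
  by_contra hsupp
  push_neg at hsupp
  have hsupp' : ∀ z ∈ c.support, z = x ∨ z ∈ s := by
    intro z hz
    exact Set.mem_insert_iff.mp (hsupp z hz)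
  by_cases hxs : x ∈ c.support
  · have hc' := hc.rotate hxs
    have hsub : ∀ z ∈ (c.rotate x hxs).support, z = x ∨ z ∈ s := by
      intro z hz
      rw [SimpleGraph.Walk.support_eq_cons] at hz
      rcases List.mem_cons.mp hz with h | h
      · exact Or.inl h
      · have := (SimpleGraph.Walk.support_rotate c x hxs).mem_iff.mp h
        exact hsupp' z (List.mem_of_mem_tail this)
    obtain ⟨y, z, hyz, hxy, hxz, hy, hz⟩ := cycle_two_nbrs hc'
    have hyA : y ∈ s := by
      rcases hsub y hy with h | h
      · exact absurd (h ▸ hxy) (G.irrefl)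
      · exact h
    have hzA : z ∈ s := by
      rcases hsub z hz with h | h
      · exact absurd (h ▸ hxz) (G.irrefl)
      · exact h
    exact hyz (hx y z hxy hxz hyA hzA)
  · obtain ⟨z, hz, hzs⟩ := hA u c hc
    rcases hsupp' z hz with h | h
    · exact hxs (h ▸ hz)
    · exact hzs h

end helpers


section helpers2
variable {V : Type*} [Fintype V] [DecidableEq V] {G : SimpleGraph V} [DecidableRel G.Adj]

lemma inter_insert_self (x : V) (T : Finset V) :
    G.neighborFinset x ∩ insert x T = G.neighborFinset x ∩ T := by
  ext y
  simp only [mem_inter, mem_insert, mem_neighborFinset]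
  constructor
  · rintro ⟨hy, rfl | hyT⟩
    · exact absurd hy (G.irrefl)
    · exact ⟨hy, hyT⟩
  · exact fun ⟨hy, hyT⟩ => ⟨hy, Or.inr hyT⟩

lemma inter_insert_of_not_adj {x z : V} (h : ¬ G.Adj x z) (T : Finset V) :
    G.neighborFinset z ∩ insert x T = G.neighborFinset z ∩ T := by
  ext y
  simp only [mem_inter, mem_insert, mem_neighborFinset]
  constructor
  · rintro ⟨hy, rfl | hyT⟩
    · exact absurd hy.symm h
    · exact ⟨hy, hyT⟩
  · exact fun ⟨hy, hyT⟩ => ⟨hy, Or.inr hyT⟩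

lemma card_inter_insert_le (z x : V) (T : Finset V) :
    (G.neighborFinset z ∩ insert x T).card ≤ (G.neighborFinset z ∩ T).card + 1 := by
  have hsub : G.neighborFinset z ∩ insert x T ⊆ insert x (G.neighborFinset z ∩ T) := by
    intro y hy
    simp only [mem_inter, mem_insert] at hy ⊢
    tauto
  exact le_trans (card_le_card hsub) (card_insert_le _ _)

lemma card_inter_le_degree (z : V) (T : Finset V) :
    (G.neighborFinset z ∩ T).card ≤ G.degree z :=
  card_le_card inter_subset_left

lemma acyclic_insert_finset {A : Finset V} {x : V}
    (h1 : (G.neighborFinset x ∩ A).card ≤ 1)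
    (hac : (G.induce (↑A : Set V)).IsAcyclic) :
    (G.induce (↑(insert x A) : Set V)).IsAcyclic := by
  have hco : (↑(insert x A) : Set V) = insert x (↑A : Set V) := by
    simp
  rw [hco]
  refine acyclic_insert ?_ hac
  intro y z hy hz hyA hzA
  exact Finset.card_le_one.mp h1 y
    (by simp only [mem_inter, mem_neighborFinset]; exact ⟨hy, Finset.mem_coe.mp hyA⟩) z
    (by simp only [mem_inter, mem_neighborFinset]; exact ⟨hz, Finset.mem_coe.mp hzA⟩)

/-- Move a vertex `x` from the `B`-side to the `A`-side of a partition. -/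
lemma FFPartOn.insertA {S A : Finset V} (hA : FFPartOn G S A) {x : V}
    (hxA : x ∉ A)
    (h1 : (G.neighborFinset x ∩ A).card ≤ 1)
    (h2 : ∀ y ∈ G.neighborFinset x ∩ A, (G.neighborFinset y ∩ A).card ≤ 2)
    {S' : Finset V} (hS' : S' \ insert x A ⊆ S \ A) (hAS : insert x A ⊆ S') :
    FFPartOn G S' (insert x A) := by
  obtain ⟨hsub, hdA, hdB, hacA, hacB⟩ := hA
  refine ⟨hAS, ?_, ?_, acyclic_insert_finset h1 hacA, ?_⟩
  · intro z hz
    rcases Finset.mem_insert.mp hz with rfl | hzA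
    · rw [inter_insert_self]
      omega
    · by_cases hadj : G.Adj x z
      · have hz2 : (G.neighborFinset z ∩ A).card ≤ 2 :=
          h2 z (by simp only [mem_inter, mem_neighborFinset]; exact ⟨hadj, hzA⟩)
        have := card_inter_insert_le (G := G) z x A
        omega
      · rw [inter_insert_of_not_adj hadj]
        exact hdA z hzA
  · intro z hz
    have hz' : z ∈ S \ A := hS' hz
    calc (G.neighborFinset z ∩ (S' \ insert x A)).card
        ≤ (G.neighborFinset z ∩ (S \ A)).card :=
          card_le_card (by exact inter_subset_inter Finset.Subset.rfl hS')
      _ ≤ 4 := hdB z hz'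
  · exact acyclic_mono (by exact_mod_cast hS') hacB

/-- Move a vertex `x` from the `A`-side to the `B`-side of a partition. -/
lemma FFPartOn.eraseA {S A : Finset V} (hA : FFPartOn G S A) {x : V}
    (hxA : x ∈ A)
    (h1 : (G.neighborFinset x ∩ (S \ A)).card ≤ 1)
    (h2 : ∀ y ∈ G.neighborFinset x ∩ (S \ A), (G.neighborFinset y ∩ (S \ A)).card ≤ 3) :
    FFPartOn G S (A.erase x) := by
  obtain ⟨hsub, hdA, hdB, hacA, hacB⟩ := hA
  have hxS : x ∈ S := hsub hxA
  have hBeq : S \ A.erase x = insert x (S \ A) := by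
    ext z
    simp only [mem_sdiff, mem_erase, mem_insert, not_and]
    constructor
    · rintro ⟨hzS, hz⟩
      by_cases hzx : z = x
      · exact Or.inl hzx
      · exact Or.inr ⟨hzS, fun hzA => (hz hzx hzA).elim⟩
    · rintro (rfl | ⟨hzS, hzA⟩)
      · exact ⟨hxS, fun h => absurd rfl h⟩
      · exact ⟨hzS, fun _ h => hzA h⟩
  refine ⟨(erase_subset _ _).trans hsub, ?_, ?_, ?_, ?_⟩
  · intro z hz
    calc (G.neighborFinset z ∩ A.erase x).card
        ≤ (G.neighborFinset z ∩ A).card :=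
          card_le_card (inter_subset_inter Finset.Subset.rfl (erase_subset _ _))
      _ ≤ 3 := hdA z (mem_of_mem_erase hz)
  · intro z hz
    rw [hBeq] at hz ⊢
    rcases Finset.mem_insert.mp hz with rfl | hzB
    · rw [inter_insert_self]
      omega
    · by_cases hadj : G.Adj x z
      · have hz3 : (G.neighborFinset z ∩ (S \ A)).card ≤ 3 :=
          h2 z (by simp only [mem_inter, mem_neighborFinset]; exact ⟨hadj, hzB⟩)
        have := card_inter_insert_le (G := G) z x (S \ A)
        omega
      · rw [inter_insert_of_not_adj hadj]
        exact hdB z hzB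
  · exact acyclic_mono (by exact_mod_cast erase_subset x A) hacA
  · rw [hBeq]
    exact acyclic_insert_finset h1 hacB

/-- Extend a partition of `univ \ {x}` to `univ` by putting `x` on the `A`-side. -/
lemma FFPartOn.addA {x : V} {A : Finset V} (hA : FFPartOn G (Finset.univ \ {x}) A)
    (h1 : (G.neighborFinset x ∩ A).card ≤ 1)
    (h2 : ∀ y ∈ G.neighborFinset x ∩ A, (G.neighborFinset y ∩ A).card ≤ 2) :
    FFPartOn G Finset.univ (insert x A) := by
  have hxA : x ∉ A := fun h => by simpa using (Finset.mem_sdiff.mp (hA.1 h)).2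
  have hBeq : Finset.univ \ insert x A = (Finset.univ \ {x}) \ A := by
    ext z
    simp only [mem_sdiff, mem_univ, true_and, mem_insert, mem_singleton, not_or]
  exact hA.insertA hxA h1 h2 (hBeq ▸ Finset.Subset.rfl) (subset_univ _)

/-- Extend a partition of `univ \ {x}` to `univ` by putting `x` on the `B`-side. -/
lemma FFPartOn.addB {x : V} {A : Finset V} (hA : FFPartOn G (Finset.univ \ {x}) A)
    (h1 : (G.neighborFinset x ∩ ((Finset.univ \ {x}) \ A)).card ≤ 1)
    (h2 : ∀ y ∈ G.neighborFinset x ∩ ((Finset.univ \ {x}) \ A),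
        (G.neighborFinset y ∩ ((Finset.univ \ {x}) \ A)).card ≤ 3) :
    FFPartOn G Finset.univ A := by
  obtain ⟨hsub, hdA, hdB, hacA, hacB⟩ := hA
  have hxA : x ∉ A := fun h => by simpa using (Finset.mem_sdiff.mp (hsub h)).2
  have hBeq : Finset.univ \ A = insert x ((Finset.univ \ {x}) \ A) := by
    ext z
    simp only [mem_sdiff, mem_univ, true_and, mem_insert, mem_singleton]
    constructor
    · intro hzA
      by_cases hzx : z = x
      · exact Or.inl hzx
      · exact Or.inr ⟨hzx, hzA⟩
    · rintro (rfl | ⟨_, hzA⟩)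
      · exact hxA
      · exact hzA
  refine ⟨subset_univ _, hdA, ?_, hacA, ?_⟩
  · intro z hz
    rw [hBeq] at hz ⊢
    rcases Finset.mem_insert.mp hz with rfl | hzB
    · rw [inter_insert_self]
      omega
    · by_cases hadj : G.Adj x z
      · have hz3 := h2 z (by simp only [mem_inter, mem_neighborFinset]; exact ⟨hadj, hzB⟩)
        have := card_inter_insert_le (G := G) z x ((Finset.univ \ {x}) \ A)
        omega
      · rw [inter_insert_of_not_adj hadj]
        exact hdB z hzB
  · rw [hBeq]
    exact acyclic_insert_finset h1 hacB

end helpers2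

/-- In a vertex-minimal graph with no `(𝓕₃,𝓕₄)`-partition, there is no 5-vertex
all of whose neighbors have degree at most 3, where one neighbor is a 2-vertex not
lying on any triangle. -/
theorem no_five_vertex_with_W2_neighbor {V : Type*} [Fintype V] [DecidableEq V]
    (G : SimpleGraph V) [DecidableRel G.Adj] (hmin : MinimalNoFF G) :
    ¬ ∃ v x₁ : V, G.degree v = 5 ∧ (∀ u : V, G.Adj v u → G.degree u ≤ 3) ∧
      G.Adj v x₁ ∧ G.degree x₁ = 2 ∧
      ¬ ∃ a b : V, G.Adj x₁ a ∧ G.Adj x₁ b ∧ G.Adj a b := by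
  rintro ⟨v, x₁, hdeg5, hnbr3, hvx₁, hdeg2, htri⟩
  have hx₁v : G.Adj x₁ v := hvx₁.symm
  have hcard2 : (G.neighborFinset x₁).card = 2 := by
    rw [card_neighborFinset_eq_degree]; exact hdeg2
  obtain ⟨a, b, hab, hNab⟩ := Finset.card_eq_two.mp hcard2
  have hvmem : v ∈ G.neighborFinset x₁ := (SimpleGraph.mem_neighborFinset _ _ _).mpr hx₁v
  obtain ⟨w, hvw, hNx₁⟩ : ∃ w, v ≠ w ∧ G.neighborFinset x₁ = {v, w} := by
    rw [hNab] at hvmem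
    rcases Finset.mem_insert.mp hvmem with rfl | hv
    · exact ⟨b, hab, hNab⟩
    · rw [Finset.mem_singleton] at hv; subst hv
      exact ⟨a, hab.symm, by rw [hNab, Finset.pair_comm]⟩
  have hx₁w : G.Adj x₁ w := by
    rw [← SimpleGraph.mem_neighborFinset, hNx₁]
    exact Finset.mem_insert_of_mem (Finset.mem_singleton_self _)
  have hnadj : ¬ G.Adj v w := fun h => htri ⟨v, w, hx₁v, hx₁w, h⟩
  obtain ⟨A, hA⟩ := hmin.2 x₁
  have hvS : v ∈ Finset.univ \ {x₁} :=
    Finset.mem_sdiff.mpr ⟨Finset.mem_univ v, by simpa using hvx₁.ne⟩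
  have hwS : w ∈ Finset.univ \ {x₁} :=
    Finset.mem_sdiff.mpr ⟨Finset.mem_univ w, by simpa using hx₁w.ne'⟩
  -- the size of `N(v)` inside `univ \ {x₁}` is `4`
  have hx₁Nv : x₁ ∈ G.neighborFinset v := (SimpleGraph.mem_neighborFinset _ _ _).mpr hvx₁
  have hNvS : (G.neighborFinset v ∩ (Finset.univ \ {x₁})).card = 4 := by
    have heq : G.neighborFinset v ∩ (Finset.univ \ {x₁}) = (G.neighborFinset v).erase x₁ := by
      ext z
      simp only [mem_inter, mem_sdiff, mem_univ, true_and, mem_singleton, mem_erase]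
      tauto
    rw [heq, Finset.card_erase_of_mem hx₁Nv, card_neighborFinset_eq_degree, hdeg5]
  apply hmin.1
  by_cases hvA : v ∈ A <;> by_cases hwA : w ∈ A
  · -- both in A : put x₁ on the B-side
    have hNB : G.neighborFinset x₁ ∩ ((Finset.univ \ {x₁}) \ A) = ∅ := by
      rw [hNx₁]
      ext z
      simp only [Finset.notMem_empty, iff_false]
      intro hz
      obtain ⟨hz1, hz2⟩ := Finset.mem_inter.mp hz
      have hzA : z ∉ A := (Finset.mem_sdiff.mp hz2).2
      rcases Finset.mem_insert.mp hz1 with rfl | hz1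
      · exact hzA hvA
      · rw [Finset.mem_singleton] at hz1; subst hz1; exact hzA hwA
    exact ⟨A, hA.addB (by rw [hNB]; simp) (by rw [hNB]; simp)⟩
  · -- v ∈ A, w ∉ A
    have hwB : w ∈ (Finset.univ \ {x₁}) \ A := Finset.mem_sdiff.mpr ⟨hwS, hwA⟩
    by_cases hsatA : (G.neighborFinset v ∩ A).card ≤ 2
    · -- put x₁ on the A-side
      have hNA : G.neighborFinset x₁ ∩ A = {v} := by
        rw [hNx₁]
        ext z
        rw [Finset.mem_singleton]
        constructor
        · intro hz
          obtain ⟨hz1, hz2⟩ := Finset.mem_inter.mp hz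
          rcases Finset.mem_insert.mp hz1 with rfl | hz1
          · rfl
          · rw [Finset.mem_singleton] at hz1; subst hz1; exact absurd hz2 hwA
        · rintro rfl
          exact Finset.mem_inter.mpr ⟨Finset.mem_insert_self _ _, hvA⟩
      refine ⟨_, hA.addA (by rw [hNA]; simp) ?_⟩
      intro y hy
      rw [hNA, Finset.mem_singleton] at hy
      subst hy
      exact hsatA
    · by_cases hsatB : (G.neighborFinset w ∩ ((Finset.univ \ {x₁}) \ A)).card ≤ 3
      · -- put x₁ on the B-side
        have hNB : G.neighborFinset x₁ ∩ ((Finset.univ \ {x₁}) \ A) = {w} := by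
          rw [hNx₁]
          ext z
          rw [Finset.mem_singleton]
          constructor
          · intro hz
            obtain ⟨hz1, hz2⟩ := Finset.mem_inter.mp hz
            rcases Finset.mem_insert.mp hz1 with rfl | hz1
            · exact absurd hvA (Finset.mem_sdiff.mp hz2).2
            · exact Finset.mem_singleton.mp hz1
          · rintro rfl
            exact Finset.mem_inter.mpr
              ⟨Finset.mem_insert_of_mem (Finset.mem_singleton_self _), hwB⟩
        refine ⟨A, hA.addB (by rw [hNB]; simp) ?_⟩
        intro y hy
        rw [hNB, Finset.mem_singleton] at hy
        subst hy
        exact hsatB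
      · -- v is A-saturated : move v to the B-side, then put x₁ on the A-side
        have hv3 : (G.neighborFinset v ∩ A).card = 3 :=
          le_antisymm (hA.2.1 v hvA) (by omega)
        have hNvB : (G.neighborFinset v ∩ ((Finset.univ \ {x₁}) \ A)).card = 1 := by
          have hsplit : G.neighborFinset v ∩ ((Finset.univ \ {x₁}) \ A) =
              (G.neighborFinset v ∩ (Finset.univ \ {x₁})) \ (G.neighborFinset v ∩ A) := by
            ext z
            simp only [mem_inter, mem_sdiff]
            tauto
          have hsub : G.neighborFinset v ∩ A ⊆ G.neighborFinset v ∩ (Finset.univ \ {x₁}) :=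
            inter_subset_inter Finset.Subset.rfl hA.1
          rw [hsplit, Finset.card_sdiff_of_subset hsub, hNvS, hv3]
        have hA₂ : FFPartOn G (Finset.univ \ {x₁}) (A.erase v) := by
          refine hA.eraseA hvA (by omega) ?_
          intro z hz
          have hadj : G.Adj v z :=
            (SimpleGraph.mem_neighborFinset _ _ _).mp (Finset.mem_inter.mp hz).1
          calc (G.neighborFinset z ∩ ((Finset.univ \ {x₁}) \ A)).card
              ≤ G.degree z := card_inter_le_degree z _
            _ ≤ 3 := hnbr3 z hadj
        have hNA₂ : G.neighborFinset x₁ ∩ (A.erase v) = ∅ := by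
          rw [hNx₁]
          ext z
          simp only [Finset.notMem_empty, iff_false]
          intro hz
          obtain ⟨hz1, hz2⟩ := Finset.mem_inter.mp hz
          rcases Finset.mem_insert.mp hz1 with rfl | hz1
          · exact (Finset.mem_erase.mp hz2).1 rfl
          · rw [Finset.mem_singleton] at hz1; subst hz1
            exact hwA (Finset.mem_erase.mp hz2).2
        exact ⟨_, hA₂.addA (by rw [hNA₂]; simp) (by rw [hNA₂]; simp)⟩
  · -- v ∉ A, w ∈ A
    have hvB : v ∈ (Finset.univ \ {x₁}) \ A := Finset.mem_sdiff.mpr ⟨hvS, hvA⟩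
    by_cases hsatA : (G.neighborFinset w ∩ A).card ≤ 2
    · -- put x₁ on the A-side
      have hNA : G.neighborFinset x₁ ∩ A = {w} := by
        rw [hNx₁]
        ext z
        rw [Finset.mem_singleton]
        constructor
        · intro hz
          obtain ⟨hz1, hz2⟩ := Finset.mem_inter.mp hz
          rcases Finset.mem_insert.mp hz1 with rfl | hz1
          · exact absurd hz2 hvA
          · exact Finset.mem_singleton.mp hz1
        · rintro rfl
          exact Finset.mem_inter.mpr
            ⟨Finset.mem_insert_of_mem (Finset.mem_singleton_self _), hwA⟩
      refine ⟨_, hA.addA (by rw [hNA]; simp) ?_⟩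
      intro y hy
      rw [hNA, Finset.mem_singleton] at hy
      subst hy
      exact hsatA
    · by_cases hsatB : (G.neighborFinset v ∩ ((Finset.univ \ {x₁}) \ A)).card ≤ 3
      · -- put x₁ on the B-side
        have hNB : G.neighborFinset x₁ ∩ ((Finset.univ \ {x₁}) \ A) = {v} := by
          rw [hNx₁]
          ext z
          rw [Finset.mem_singleton]
          constructor
          · intro hz
            obtain ⟨hz1, hz2⟩ := Finset.mem_inter.mp hz
            rcases Finset.mem_insert.mp hz1 with rfl | hz1
            · rfl
            · rw [Finset.mem_singleton] at hz1; subst hz1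
              exact absurd hwA (Finset.mem_sdiff.mp hz2).2
          · rintro rfl
            exact Finset.mem_inter.mpr ⟨Finset.mem_insert_self _ _, hvB⟩
        refine ⟨A, hA.addB (by rw [hNB]; simp) ?_⟩
        intro y hy
        rw [hNB, Finset.mem_singleton] at hy
        subst hy
        exact hsatB
      · -- v is B-saturated : all of its remaining neighbors lie in B, move v to the A-side
        have hsubB : G.neighborFinset v ∩ ((Finset.univ \ {x₁}) \ A) ⊆
            G.neighborFinset v ∩ (Finset.univ \ {x₁}) :=
          inter_subset_inter Finset.Subset.rfl Finset.sdiff_subset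
        have heqBS : G.neighborFinset v ∩ ((Finset.univ \ {x₁}) \ A) =
            G.neighborFinset v ∩ (Finset.univ \ {x₁}) :=
          Finset.eq_of_subset_of_card_le hsubB (by omega)
        have hNvA : G.neighborFinset v ∩ A = ∅ := by
          ext z
          simp only [Finset.notMem_empty, iff_false]
          intro hz
          obtain ⟨hz1, hz2⟩ := Finset.mem_inter.mp hz
          have hzS : z ∈ Finset.univ \ {x₁} := hA.1 hz2
          have hzB : z ∈ G.neighborFinset v ∩ ((Finset.univ \ {x₁}) \ A) := by
            rw [heqBS]
            exact Finset.mem_inter.mpr ⟨hz1, hzS⟩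
          exact (Finset.mem_sdiff.mp (Finset.mem_inter.mp hzB).2).2 hz2
        have hA₂ : FFPartOn G (Finset.univ \ {x₁}) (insert v A) :=
          hA.insertA hvA (by rw [hNvA]; simp) (by rw [hNvA]; simp)
            (Finset.sdiff_subset_sdiff Finset.Subset.rfl (Finset.subset_insert _ _))
            (Finset.insert_subset hvS hA.1)
        have hNB₂ : G.neighborFinset x₁ ∩ ((Finset.univ \ {x₁}) \ insert v A) = ∅ := by
          rw [hNx₁]
          ext z
          simp only [Finset.notMem_empty, iff_false]
          intro hz
          obtain ⟨hz1, hz2⟩ := Finset.mem_inter.mp hz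
          have hzA : z ∉ insert v A := (Finset.mem_sdiff.mp hz2).2
          rcases Finset.mem_insert.mp hz1 with rfl | hz1
          · exact hzA (Finset.mem_insert_self _ _)
          · rw [Finset.mem_singleton] at hz1; subst hz1
            exact hzA (Finset.mem_insert_of_mem hwA)
        exact ⟨_, hA₂.addB (by rw [hNB₂]; simp) (by rw [hNB₂]; simp)⟩
  · -- both in B : put x₁ on the A-side
    have hNA : G.neighborFinset x₁ ∩ A = ∅ := by
      rw [hNx₁]
      ext z
      simp only [Finset.notMem_empty, iff_false]
      intro hz
      obtain ⟨hz1, hz2⟩ := Finset.mem_inter.mp hz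
      rcases Finset.mem_insert.mp hz1 with rfl | hz1
      · exact hvA hz2
      · rw [Finset.mem_singleton] at hz1; subst hz1; exact hwA hz2
    exact ⟨_, hA.addA (by rw [hNA]; simp) (by rw [hNA]; simp)⟩
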